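/- arXiv:quant-ph/0303039 — 3 statements merged into one kernel-verified Lean document; each statement's English description precedes it below -/
import Mathlib

section
/- Let n ≥ 1 and N = 2^n. Every diagonal unitary matrix U = Matrix.diagonal u on ℂ^N (where u : Fin N → ℂ with ‖u j‖ = 1 for all j) can be written, up to global phase, as a product of at most 2^(n+1) − 3 elementary gates: there exist a real number Φ and a list L of N × N complex matrices with L.length ≤ 2^(n+1) − 3, such that every member of L is either a controlled-not matrix C_j^k (for some lines 1 ≤ j ≠ k ≤ n) or a z-rotation R_z^{(j)}(α) on some line j (for some 1 ≤ j ≤ n and α ∈ ℝ), and Matrix.diagonal u = exp(i·Φ) • L.prod. -/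
open Matrix

/-- The controlled-not gate `C_j^k` on `n` qubits (lines numbered `1,…,n`, line 1 holding
the most significant bit, so line `l` corresponds to bit position `n - l`): the permutation
matrix replacing bit `b_k` of a basis index by `b_k ⊕ b_j`. -/
noncomputable def cnot (n j k : ℕ) : Matrix (Fin (2^n)) (Fin (2^n)) ℂ :=
  Matrix.of fun r c =>
    if (r : ℕ) = Nat.xor (c : ℕ) (if Nat.testBit (c : ℕ) (n - j) then 2^(n - k) else 0)
    then 1 else 0

/-- The z-rotation `R_z(α)` acting on line `j` of `n` qubits: the diagonal matrix whose
entry at a basis index is `exp(-i·α/2)` if bit `b_j = 0` and `exp(i·α/2)` if `b_j = 1`. -/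
noncomputable def rzLine (n j : ℕ) (α : ℝ) : Matrix (Fin (2^n)) (Fin (2^n)) ℂ :=
  Matrix.diagonal fun m =>
    if Nat.testBit (m : ℕ) (n - j)
    then Complex.exp (Complex.I * (α : ℂ) / 2)
    else Complex.exp (-(Complex.I * (α : ℂ) / 2))

/-!
Write the diagonal as `exp(i·v(b_1⋯b_n))`. Splitting `v` on the last bit,
`v(2q + b) = (v(2q) + v(2q+1))/2 ± (v(2q+1) - v(2q))/2`, peels off a z-rotation on line `k + 1`
whose angle is selected by lines `1, …, k` (a multiplexed rotation), and leaves a phase on the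
first `k` lines. A multiplexed rotation with `k + 1` controls followed by `C_{k+1}^t` is two
multiplexed rotations with `k` controls, each followed by `C_k^t`, with `C_{k+1}^t` in between:
conjugation by `C_k^t C_{k+1}^t` flips the sign of the second angle according to `b_k ⊕ b_{k+1}`.
With `k` controls such a block costs `2^(k+1) - 1` gates, a multiplexed rotation `2^(k+1)` (as
`C_k^t` squares to `1`), and the whole diagonal `1 + ∑_{k=1}^{n-1} 2^(k+1) = 2^(n+1) - 3`.
-/

namespace DiagonalSynthesis

def cnotNat (p q m : ℕ) : ℕ := m ^^^ (if m.testBit p then 2 ^ q else 0)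

theorem testBit_cnotNat (p q m i : ℕ) :
    (cnotNat p q m).testBit i = (m.testBit i ^^ (m.testBit p && decide (q = i))) := by
  unfold cnotNat
  cases m.testBit p <;> simp [Nat.testBit_xor, Nat.testBit_two_pow]

theorem cnotNat_comm {p₁ p₂ q : ℕ} (h₁ : p₁ ≠ q) (h₂ : p₂ ≠ q) (m : ℕ) :
    cnotNat p₁ q (cnotNat p₂ q m) = cnotNat p₂ q (cnotNat p₁ q m) := by
  refine Nat.eq_of_testBit_eq fun i => ?_
  simp only [testBit_cnotNat, h₁.symm, h₂.symm, decide_false, Bool.and_false, Bool.xor_false]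
  cases m.testBit i <;> cases m.testBit p₁ <;> cases m.testBit p₂ <;> simp

theorem cnotNat_involutive {p q : ℕ} (h : p ≠ q) : Function.Involutive (cnotNat p q) := by
  intro m
  refine Nat.eq_of_testBit_eq fun i => ?_
  simp only [testBit_cnotNat, h.symm, decide_false, Bool.and_false, Bool.xor_false]
  cases m.testBit i <;> cases m.testBit p <;> simp

theorem cnotNat_lt (p : ℕ) {n q m : ℕ} (hq : q < n) (hm : m < 2 ^ n) :
    cnotNat p q m < 2 ^ n := by
  unfold cnotNat
  split
  · exact Nat.xor_lt_two_pow hm (Nat.pow_lt_pow_right (by norm_num) hq)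
  · simpa using hm

theorem cnotNat_shiftRight (p : ℕ) {q s : ℕ} (h : q < s) (m : ℕ) :
    cnotNat p q m >>> s = m >>> s :=
  Nat.eq_of_testBit_eq fun i => by
    simp only [Nat.testBit_shiftRight, testBit_cnotNat, decide_eq_false (by omega : q ≠ s + i),
      Bool.and_false, Bool.xor_false]

theorem shiftRight_eq_two_mul_add (m s : ℕ) :
    m >>> s = 2 * (m >>> (s + 1)) + (m.testBit s).toNat := by
  conv_lhs => rw [← Nat.bit_testBit_zero_shiftRight_one (m >>> s)]
  rw [Nat.bit_val, Nat.testBit_shiftRight, Nat.shiftRight_add, add_zero]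

def bitSign (b : Bool) : ℝ := if b then 1 else -1

variable {n : ℕ}

noncomputable def phase (n : ℕ) (f : ℕ → ℝ) : Matrix (Fin (2 ^ n)) (Fin (2 ^ n)) ℂ :=
  diagonal fun m => Complex.exp (Complex.I * f m)

theorem phase_mul_phase (f g : ℕ → ℝ) : phase n f * phase n g = phase n (f + g) := by
  simp only [phase, diagonal_mul_diagonal, ← Complex.exp_add, Pi.add_apply, Complex.ofReal_add,
    mul_add]

theorem phase_congr {f g : ℕ → ℝ} (h : ∀ m < 2 ^ n, f m = g m) : phase n f = phase n g := by
  unfold phase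
  congr with m
  rw [h m m.isLt]

theorem phase_const (Φ : ℝ) : phase n (fun _ => Φ) = Complex.exp (Complex.I * Φ) • 1 := by
  rw [phase, smul_one_eq_diagonal]

theorem rzLine_eq_phase (j : ℕ) (α : ℝ) :
    rzLine n j α = phase n fun m => bitSign (m.testBit (n - j)) * α / 2 := by
  unfold rzLine phase
  congr with m
  cases h : (m : ℕ).testBit (n - j) <;>
    simp only [h, bitSign, if_true, Bool.false_eq_true, if_false] <;> push_cast <;> ring_nf

theorem cnot_apply (j k : ℕ) (r c : Fin (2 ^ n)) :
    cnot n j k r c = if (r : ℕ) = cnotNat (n - j) (n - k) c then 1 else 0 := rfl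

theorem cnot_mul_phase {j t : ℕ} (h : n - j ≠ n - t) (f : ℕ → ℝ) :
    cnot n j t * phase n f = phase n (f ∘ cnotNat (n - j) (n - t)) * cnot n j t := by
  ext r c
  rw [phase, phase, mul_diagonal, diagonal_mul, cnot_apply]
  split_ifs with hrc
  · rw [Function.comp_apply, hrc, cnotNat_involutive h, mul_comm]
  · simp

theorem cnot_mul_cnot_apply {j₁ j₂ t : ℕ} (ht : n - t < n) (r c : Fin (2 ^ n)) :
    (cnot n j₁ t * cnot n j₂ t) r c =
      if (r : ℕ) = cnotNat (n - j₁) (n - t) (cnotNat (n - j₂) (n - t) c) then 1 else 0 := by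
  rw [mul_apply, Finset.sum_eq_single ⟨_, cnotNat_lt (n - j₂) ht c.isLt⟩]
  · simp [cnot_apply]
  · intro x _ hx
    rw [cnot_apply (r := x), if_neg (fun h => hx (Fin.ext h)), mul_zero]
  · simp

theorem cnot_mul_cnot_self {j t : ℕ} (h : n - j ≠ n - t) (ht : n - t < n) :
    cnot n j t * cnot n j t = 1 := by
  ext r c
  rw [cnot_mul_cnot_apply ht, cnotNat_involutive h, one_apply]
  simp only [Fin.val_inj]

theorem cnot_mul_cnot_comm {j₁ j₂ t : ℕ} (h₁ : n - j₁ ≠ n - t) (h₂ : n - j₂ ≠ n - t)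
    (ht : n - t < n) : cnot n j₁ t * cnot n j₂ t = cnot n j₂ t * cnot n j₁ t := by
  ext r c
  rw [cnot_mul_cnot_apply ht, cnot_mul_cnot_apply ht, cnotNat_comm h₁ h₂]

/-- Line `0` does not exist: its bit position `n` is clear in every index, so `C_0^t = 1`. This
lets the multiplexor recursion start with no controls. -/
theorem cnot_zero_left (t : ℕ) : cnot n 0 t = 1 := by
  ext r c
  rw [cnot_apply, cnotNat, Nat.sub_zero, Nat.testBit_eq_false_of_lt c.isLt, one_apply]
  simp [Fin.ext_iff]

/-- The phase of a z-rotation on line `t` whose angle `α (m >>> (n - k))` is selected by the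
bits `b_1 ⋯ b_k` of lines `1, …, k`. -/
noncomputable def muxPhase (n k t : ℕ) (α : ℕ → ℝ) (m : ℕ) : ℝ :=
  bitSign (m.testBit (n - t)) * α (m >>> (n - k)) / 2

/-- The factor `bitSign b_k` in the second angle cancels the `b_k` in the sign flip
`bitSign (b_t ⊕ b_k ⊕ b_{k+1})` caused by the two CNOTs. -/
theorem muxPhase_succ {k t : ℕ} (hkt : k + 1 < t) (htn : t ≤ n) (α : ℕ → ℝ) (m : ℕ) :
    muxPhase n (k + 1) t α m =
      muxPhase n k t (fun q => (α (2 * q) + α (2 * q + 1)) / 2) m +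
      muxPhase n k t (fun q => bitSign (q.testBit 0) * (α (2 * q + 1) - α (2 * q)) / 2)
        (cnotNat (n - (k + 1)) (n - t) (cnotNat (n - k) (n - t) m)) := by
  have h₁ : n - (k + 1) ≠ n - t := by omega
  have hshift := shiftRight_eq_two_mul_add m (n - (k + 1))
  rw [(by omega : n - (k + 1) + 1 = n - k)] at hshift
  simp only [muxPhase, cnotNat_shiftRight _ (by omega : n - t < n - k), testBit_cnotNat,
    decide_true, Bool.and_true, decide_eq_false h₁.symm, Bool.and_false, Bool.xor_false, hshift,
    Nat.testBit_shiftRight, add_zero]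
  cases m.testBit (n - t) <;> cases m.testBit (n - k) <;> cases m.testBit (n - (k + 1)) <;>
    simp [bitSign] <;> ring

theorem phase_shiftRight_succ {k : ℕ} (hk : k < n) (v : ℕ → ℝ) :
    phase n (fun m => v (m >>> (n - (k + 1)))) =
      phase n (fun m => (v (2 * (m >>> (n - k))) + v (2 * (m >>> (n - k)) + 1)) / 2) *
        phase n (muxPhase n k (k + 1) fun q => v (2 * q + 1) - v (2 * q)) := by
  rw [phase_mul_phase]
  congr with m
  rw [Pi.add_apply, muxPhase, shiftRight_eq_two_mul_add m (n - (k + 1)),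
    (by omega : n - (k + 1) + 1 = n - k)]
  cases m.testBit (n - (k + 1)) <;> simp [bitSign] <;> ring

def IsGate (n : ℕ) (M : Matrix (Fin (2 ^ n)) (Fin (2 ^ n)) ℂ) : Prop :=
  (∃ j k, 1 ≤ j ∧ j ≤ n ∧ 1 ≤ k ∧ k ≤ n ∧ j ≠ k ∧ M = cnot n j k) ∨
  (∃ j α, 1 ≤ j ∧ j ≤ n ∧ M = rzLine n j α)

theorem isGate_cnot {j k : ℕ} (hj : 1 ≤ j) (hjn : j ≤ n) (hk : 1 ≤ k) (hkn : k ≤ n)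
    (hjk : j ≠ k) : IsGate n (cnot n j k) :=
  Or.inl ⟨j, k, hj, hjn, hk, hkn, hjk, rfl⟩

theorem isGate_rzLine {j : ℕ} (hj : 1 ≤ j) (hjn : j ≤ n) (α : ℝ) : IsGate n (rzLine n j α) :=
  Or.inr ⟨j, α, hj, hjn, rfl⟩

def HasCircuit (n ℓ : ℕ) (M : Matrix (Fin (2 ^ n)) (Fin (2 ^ n)) ℂ) : Prop :=
  ∃ L : List (Matrix (Fin (2 ^ n)) (Fin (2 ^ n)) ℂ),
    L.length = ℓ ∧ (∀ g ∈ L, IsGate n g) ∧ L.prod = M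

theorem IsGate.hasCircuit {M : Matrix (Fin (2 ^ n)) (Fin (2 ^ n)) ℂ} (h : IsGate n M) :
    HasCircuit n 1 M :=
  ⟨[M], rfl, by simpa using h, List.prod_singleton⟩

theorem HasCircuit.mul {a b : ℕ} {A B : Matrix (Fin (2 ^ n)) (Fin (2 ^ n)) ℂ}
    (hA : HasCircuit n a A) (hB : HasCircuit n b B) : HasCircuit n (a + b) (A * B) := by
  obtain ⟨L₁, rfl, hL₁, rfl⟩ := hA
  obtain ⟨L₂, rfl, hL₂, rfl⟩ := hB
  refine ⟨L₁ ++ L₂, List.length_append, fun g hg => ?_, List.prod_append⟩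
  rcases List.mem_append.1 hg with hg | hg
  exacts [hL₁ g hg, hL₂ g hg]

theorem hasCircuit_phase_muxPhase_mul_cnot {k t : ℕ} (hkt : k < t) (htn : t ≤ n)
    (α : ℕ → ℝ) :
    HasCircuit n (2 ^ (k + 1) - 1) (phase n (muxPhase n k t α) * cnot n k t) := by
  induction k generalizing α with
  | zero =>
    have hrz : phase n (muxPhase n 0 t α) = rzLine n t (α 0) := by
      rw [rzLine_eq_phase]
      refine phase_congr fun m hm => ?_
      rw [muxPhase, Nat.sub_zero, Nat.shiftRight_eq_zero m n hm]
    rw [cnot_zero_left, mul_one, hrz]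
    exact (isGate_rzLine (by omega) htn _).hasCircuit
  | succ k ih =>
    set avg : ℕ → ℝ := fun q => (α (2 * q) + α (2 * q + 1)) / 2
    set diff : ℕ → ℝ := fun q => bitSign (q.testBit 0) * (α (2 * q + 1) - α (2 * q)) / 2
    have h₀ : n - k ≠ n - t := by omega
    have h₁ : n - (k + 1) ≠ n - t := by omega
    have ht : n - t < n := by omega
    have hcnot : IsGate n (cnot n (k + 1) t) :=
      isGate_cnot (by omega) (by omega) (by omega) htn (by omega)
    have hcirc := (ih (by omega) avg).mul (hcnot.hasCircuit.mul (ih (by omega) diff))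
    convert hcirc using 1
    · have := @Nat.one_le_two_pow (k + 1)
      rw [pow_succ]
      omega
    · symm
      calc phase n (muxPhase n k t avg) * cnot n k t *
            (cnot n (k + 1) t * (phase n (muxPhase n k t diff) * cnot n k t))
          = phase n (muxPhase n k t avg) * (cnot n k t *
              (phase n (muxPhase n k t diff ∘ cnotNat (n - (k + 1)) (n - t)) *
                (cnot n (k + 1) t * cnot n k t))) := by
            rw [← mul_assoc (cnot n (k + 1) t), cnot_mul_phase h₁, mul_assoc, mul_assoc]
        _ = phase n (muxPhase n k t avg) *
              phase n ((muxPhase n k t diff ∘ cnotNat (n - (k + 1)) (n - t)) ∘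
                cnotNat (n - k) (n - t)) *
              (cnot n k t * (cnot n (k + 1) t * cnot n k t)) := by
            rw [← mul_assoc (cnot n k t), cnot_mul_phase h₀, mul_assoc, mul_assoc]
        _ = phase n (muxPhase n (k + 1) t α) * cnot n (k + 1) t := by
            rw [← mul_assoc (cnot n k t), cnot_mul_cnot_comm h₀ h₁ ht,
              mul_assoc (cnot n (k + 1) t), cnot_mul_cnot_self h₀ ht, mul_one, phase_mul_phase]
            congr with m
            exact (muxPhase_succ hkt htn α m).symm

theorem hasCircuit_phase_muxPhase {k t : ℕ} (hk : 1 ≤ k) (hkt : k < t) (htn : t ≤ n)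
    (α : ℕ → ℝ) : HasCircuit n (2 ^ (k + 1)) (phase n (muxPhase n k t α)) := by
  have hcirc := (hasCircuit_phase_muxPhase_mul_cnot hkt htn α).mul
    (isGate_cnot hk (by omega) (by omega) htn hkt.ne).hasCircuit
  rwa [mul_assoc, cnot_mul_cnot_self (by omega) (by omega), mul_one,
    Nat.sub_add_cancel Nat.one_le_two_pow] at hcirc

theorem exists_hasCircuit_phase_shiftRight {k : ℕ} (hk : 1 ≤ k) (hkn : k ≤ n) (v : ℕ → ℝ) :
    ∃ (Φ : ℝ) (M : Matrix (Fin (2 ^ n)) (Fin (2 ^ n)) ℂ), HasCircuit n (2 ^ (k + 1) - 3) M ∧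
      phase n (fun m => v (m >>> (n - k))) = Complex.exp (Complex.I * Φ) • M := by
  induction k, hk using Nat.le_induction generalizing v with
  | base =>
    refine ⟨(v 0 + v 1) / 2, phase n (muxPhase n 0 1 fun q => v (2 * q + 1) - v (2 * q)), ?_, ?_⟩
    · simpa [cnot_zero_left] using
        hasCircuit_phase_muxPhase_mul_cnot (n := n) zero_lt_one hkn
          fun q => v (2 * q + 1) - v (2 * q)
    · have hconst : (phase n fun m => (v (2 * (m >>> n)) + v (2 * (m >>> n) + 1)) / 2) =
          phase n fun _ => (v 0 + v 1) / 2 :=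
        phase_congr fun m hm => by simp [Nat.shiftRight_eq_zero m n hm]
      rw [phase_shiftRight_succ hkn, Nat.sub_zero, hconst, phase_const, smul_mul_assoc, one_mul]
  | succ k hk ih =>
    obtain ⟨Φ, M, hM, hphase⟩ := ih (by omega) fun q => (v (2 * q) + v (2 * q + 1)) / 2
    have hlength : 2 ^ (k + 1 + 1) - 3 = 2 ^ (k + 1) - 3 + 2 ^ (k + 1) := by
      have : 2 ^ 2 ≤ 2 ^ (k + 1) := Nat.pow_le_pow_right two_pos (by omega)
      rw [pow_succ]
      omega
    refine ⟨Φ, _, hlength ▸ hM.mul (hasCircuit_phase_muxPhase hk k.lt_add_one hkn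
      fun q => v (2 * q + 1) - v (2 * q)), ?_⟩
    rw [phase_shiftRight_succ hkn, hphase, smul_mul_assoc]

theorem diagonal_eq_phase_arg {u : Fin (2 ^ n) → ℂ} (hu : ∀ j, ‖u j‖ = 1) :
    diagonal u = phase n fun m => if h : m < 2 ^ n then (u ⟨m, h⟩).arg else 0 := by
  unfold phase
  congr with m
  conv_lhs => rw [← Complex.norm_mul_exp_arg_mul_I (u m), hu m]
  simp [mul_comm]

end DiagonalSynthesis

open DiagonalSynthesis in
/-- every diagonal unitary on `n ≥ 1` qubits is, up to global phase, a product
of at most `2^(n+1) - 3` elementary gates (controlled-nots and one-qubit z-rotations). -/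
theorem diagonal_circuit_synthesis (n : ℕ) (hn : 1 ≤ n)
    (u : Fin (2^n) → ℂ) (hu : ∀ j, ‖u j‖ = 1) :
    ∃ (Φ : ℝ) (L : List (Matrix (Fin (2^n)) (Fin (2^n)) ℂ)),
      L.length ≤ 2^(n+1) - 3 ∧
      (∀ M ∈ L,
        (∃ j k, 1 ≤ j ∧ j ≤ n ∧ 1 ≤ k ∧ k ≤ n ∧ j ≠ k ∧ M = cnot n j k) ∨
        (∃ j α, 1 ≤ j ∧ j ≤ n ∧ M = rzLine n j α)) ∧
      Matrix.diagonal u = Complex.exp (Complex.I * (Φ : ℂ)) • L.prod := by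
  obtain ⟨Φ, _, ⟨L, hlength, hgates, rfl⟩, hphase⟩ := exists_hasCircuit_phase_shiftRight hn le_rfl
    fun m => if h : m < 2 ^ n then (u ⟨m, h⟩).arg else 0
  refine ⟨Φ, L, hlength.le, hgates, ?_⟩
  rw [diagonal_eq_phase_arg hu, ← hphase, Nat.sub_self]
  simp only [Nat.shiftRight_zero]
end

section
/- Let n ≥ 1, N = 2^n, and let u : Fin N → ℂ satisfy ‖u j‖ = 1 for all j. Then there exist v : Fin 2^(n−1) → ℂ and w : Fin 2 → ℂ such that u j = v(⌊j/2⌋) · w(j mod 2) for all j ∈ Fin N (equivalently, Matrix.diagonal u is the Kronecker product of Matrix.diagonal v with Matrix.diagonal w) if and only if u 0 · (u 1)⁻¹ = u 2 · (u 3)⁻¹ = u 4 · (u 5)⁻¹ = ⋯ = u (N−2) · (u (N−1))⁻¹, i.e., for all 0 ≤ k ≤ N/2 − 2, u(2k) · (u(2k+1))⁻¹ = u(2k+2) · (u(2k+3))⁻¹. -/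
/-- For `n ≥ 1` and `j < 2^n`, the quotient `j / 2` is a valid `(n-1)`-qubit index. -/
lemma div2_lt {n : ℕ} (hn : 1 ≤ n) (j : Fin (2^n)) : (j : ℕ) / 2 < 2^(n-1) := by
  have h : (2:ℕ)^n = 2^(n-1) * 2 := by
    conv_lhs => rw [show n = (n-1) + 1 by omega]
    rw [pow_succ]
  have hj := j.isLt
  omega

/-- Extension of a vector indexed by `Fin N` to all of `ℕ` (by `1` out of range);
in the statements below it is only ever evaluated in range. -/
noncomputable def extend {N : ℕ} (d : Fin N → ℂ) (m : ℕ) : ℂ :=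
  if h : m < N then d ⟨m, h⟩ else 1

lemma extend_eq {N : ℕ} (d : Fin N → ℂ) (m : ℕ) (h : m < N) :
    extend d m = d ⟨m, h⟩ := by simp [extend, h]

/-- a diagonal unitary `u` on `n` qubits factors as a tensor
`v ⊗ w` on the last qubit iff the chain of ratio equalities
`u(2k)·u(2k+1)⁻¹ = u(2k+2)·u(2k+3)⁻¹` holds for all `0 ≤ k ≤ 2^(n-1) - 2`. -/
theorem tensor_iff_ratio_chain (n : ℕ) (hn : 1 ≤ n)
    (u : Fin (2^n) → ℂ) (hu : ∀ j, ‖u j‖ = 1) :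
    (∃ (v : Fin (2^(n-1)) → ℂ) (w : Fin 2 → ℂ),
        ∀ j : Fin (2^n),
          u j = v ⟨(j : ℕ) / 2, div2_lt hn j⟩ *
            w ⟨(j : ℕ) % 2, Nat.mod_lt _ (by norm_num)⟩) ↔
      (∀ k : ℕ, k + 2 ≤ 2^(n-1) →
        extend u (2*k) * (extend u (2*k+1))⁻¹ =
          extend u (2*k+2) * (extend u (2*k+3))⁻¹) := by
  have hN : (2:ℕ)^n = 2^(n-1) * 2 := by
    conv_lhs => rw [show n = (n-1) + 1 by omega]
    rw [pow_succ]
  have hune : ∀ j, u j ≠ 0 := fun j => by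
    intro h; have := hu j; rw [h] at this; simp at this
  constructor
  · rintro ⟨v, w, hvw⟩ k hk
    have h0 : 2*k < 2^n := by omega
    have h1 : 2*k+1 < 2^n := by omega
    have h2 : 2*k+2 < 2^n := by omega
    have h3 : 2*k+3 < 2^n := by omega
    rw [extend_eq u _ h0, extend_eq u _ h1, extend_eq u _ h2, extend_eq u _ h3,
      hvw ⟨2*k, h0⟩, hvw ⟨2*k+1, h1⟩, hvw ⟨2*k+2, h2⟩, hvw ⟨2*k+3, h3⟩]
    have e0 : (2*k) / 2 = k := by omega
    have e0' : (2*k) % 2 = 0 := by omega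
    have e1 : (2*k+1) / 2 = k := by omega
    have e1' : (2*k+1) % 2 = 1 := by omega
    have e2 : (2*k+2) / 2 = k+1 := by omega
    have e2' : (2*k+2) % 2 = 0 := by omega
    have e3 : (2*k+3) / 2 = k+1 := by omega
    have e3' : (2*k+3) % 2 = 1 := by omega
    simp only [e0, e0', e1, e1', e2, e2', e3, e3']
    have hv0 : v ⟨k, by omega⟩ ≠ 0 := by
      intro h
      apply hune ⟨2*k, h0⟩
      rw [hvw ⟨2*k, h0⟩]; simp only [e0, e0']
      rw [h]; ring
    have hv1 : v ⟨k+1, by omega⟩ ≠ 0 := by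
      intro h
      apply hune ⟨2*k+2, h2⟩
      rw [hvw ⟨2*k+2, h2⟩]; simp only [e2, e2']
      rw [h]; ring
    have cancel : ∀ (a b c : ℂ), a ≠ 0 → (a*b) * (a*c)⁻¹ = b * c⁻¹ := by
      intro a b c ha
      rw [mul_inv, mul_mul_mul_comm, mul_inv_cancel₀ ha, one_mul]
    rw [cancel _ _ _ hv0, cancel _ _ _ hv1]
  · intro hchain
    have key : ∀ k : ℕ, 2*k+1 < 2^n →
        extend u (2*k) * (extend u (2*k+1))⁻¹ =
          extend u 0 * (extend u 1)⁻¹ := by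
      intro k
      induction k with
      | zero => intro _; norm_num
      | succ m ih =>
        intro h
        have hm : m + 2 ≤ 2^(n-1) := by omega
        have hc := hchain m hm
        have e2 : 2*(m+1)+1 = 2*m+3 := by ring
        have e1 : 2*(m+1) = 2*m+2 := by ring
        rw [e2, e1, ← hc]
        exact ih (by omega)
    refine ⟨fun k => extend u (2*(k:ℕ)),
      fun i => if (i:ℕ) = 0 then 1 else extend u 1 * (extend u 0)⁻¹, fun j => ?_⟩
    show u j = extend u (2*((j:ℕ)/2)) *
      (if (j:ℕ)%2 = 0 then 1 else extend u 1 * (extend u 0)⁻¹)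
    have hj := j.isLt
    rcases Nat.even_or_odd (j : ℕ) with ⟨k, hk⟩ | ⟨k, hk⟩
    · rw [if_pos (by omega : (j:ℕ)%2 = 0), mul_one,
        show 2*((j:ℕ)/2) = (j:ℕ) from by omega, extend_eq u _ j.isLt]
    · rw [if_neg (by omega : ¬ (j:ℕ)%2 = 0),
        show 2*((j:ℕ)/2) = 2*k from by omega]
      have hja : u j = extend u (2*k+1) := by
        rw [extend_eq u _ (by omega)]
        exact congrArg u (Fin.ext hk)
      rw [hja]
      have hkey := key k (by omega)
      have ha : extend u (2*k) ≠ 0 := by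
        rw [extend_eq u _ (by omega)]; exact hune _
      have hb : extend u (2*k+1) ≠ 0 := by
        rw [extend_eq u _ (by omega)]; exact hune _
      have hc : extend u 0 ≠ 0 := by
        rw [extend_eq u _ (by positivity)]; exact hune _
      have hd : extend u 1 ≠ 0 := by
        have h1 : (1:ℕ) < 2^n := by
          have := Nat.one_le_two_pow (n := n-1); omega
        rw [extend_eq u _ h1]; exact hune _
      field_simp at hkey ⊢
      linear_combination -hkey
end

section
/- Let n ≥ 2. The real square matrix M of size (2^(n−1) − 1) × (2^(n−1) − 1), with rows indexed by integers 1 ≤ j ≤ 2^(n−1) − 1 and columns indexed by nonempty subsets S ⊆ {1, …, n−1}, defined by M(j, S) = 1 if j ∈ F(S) and M(j, S) = 0 otherwise, is invertible (equivalently, its determinant is nonzero). -/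
open Matrix

/-- Parity `⊕_{k ∈ S} b_k(m)` of the bits of `m` selected by `S`, where there are
`nLines` lines and line `k` holds bit position `nLines - k` (line 1 most significant). -/
def lineParity (nLines : ℕ) (S : Finset ℕ) (m : ℕ) : Bool :=
  (S.filter fun k => Nat.testBit m (nLines - k) = true).card % 2 == 1

/-- Column index type: nonempty subsets of `{1, …, n-1}`. -/
abbrev NonemptySubset (n : ℕ) := {S // S ∈ ((Finset.Icc 1 (n-1)).powerset.erase ∅)}

/-- The 0/1 real matrix with rows indexed by `1 ≤ j ≤ 2^(n-1) - 1` (row `i` corresponds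
to `j = i + 1`) and columns by nonempty `S ⊆ {1, …, n-1}`, with `M(j,S) = 1` iff
`j ∈ F(S)`, i.e. iff `⊕_{k ∈ S} b_k(j) = 1`. -/
noncomputable def Mflip (n : ℕ) :
    Matrix (Fin (2^(n-1) - 1)) (NonemptySubset n) ℝ :=
  Matrix.of fun i S => if lineParity (n-1) S.val ((i : ℕ) + 1) = true then 1 else 0

namespace MflipAux

open Finset

/-- Toggle membership of `a` in `S`. -/
def flip (a : ℕ) (S : Finset ℕ) : Finset ℕ :=
  if a ∈ S then S.erase a else insert a S

lemma flip_inter_of_notMem {a : ℕ} {Q : Finset ℕ} (ha : a ∉ Q) (S : Finset ℕ) :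
    flip a S ∩ Q = S ∩ Q := by
  unfold flip
  split
  · ext x
    simp only [mem_inter, mem_erase]
    constructor
    · rintro ⟨⟨-, h⟩, hq⟩; exact ⟨h, hq⟩
    · rintro ⟨h, hq⟩; exact ⟨⟨fun hx => ha (hx ▸ hq), h⟩, hq⟩
  · ext x
    simp only [mem_inter, mem_insert]
    constructor
    · rintro ⟨h | h, hq⟩
      · exact absurd (h ▸ hq) ha
      · exact ⟨h, hq⟩
    · rintro ⟨h, hq⟩; exact ⟨Or.inr h, hq⟩

lemma flip_inter_card_of_mem {a : ℕ} {Q : Finset ℕ} (ha : a ∈ Q) (S : Finset ℕ) :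
    (a ∈ S → (flip a S ∩ Q).card + 1 = (S ∩ Q).card) ∧
    (a ∉ S → (flip a S ∩ Q).card = (S ∩ Q).card + 1) := by
  constructor
  · intro haS
    have h1 : flip a S ∩ Q = (S ∩ Q).erase a := by
      unfold flip
      rw [if_pos haS]
      ext x
      simp only [mem_inter, mem_erase]
      tauto
    rw [h1, Finset.card_erase_add_one (mem_inter.mpr ⟨haS, ha⟩)]
  · intro haS
    have h1 : flip a S ∩ Q = insert a (S ∩ Q) := by
      unfold flip
      rw [if_neg haS]
      ext x
      simp only [mem_inter, mem_insert]
      constructor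
      · rintro ⟨h | h, hq⟩
        · exact Or.inl h
        · exact Or.inr ⟨h, hq⟩
      · rintro (rfl | ⟨h, hq⟩)
        · exact ⟨Or.inl rfl, ha⟩
        · exact ⟨Or.inr h, hq⟩
    rw [h1, Finset.card_insert_of_notMem (fun hx => haS (mem_inter.mp hx).1)]

lemma neg_one_pow_of_offset {E E' : ℕ} (h : E' = E + 1 ∨ E = E' + 1) :
    (-1 : ℝ) ^ E' = -(-1 : ℝ) ^ E := by
  rcases h with h | h <;> subst h <;> rw [pow_succ] <;> ring

lemma flip_sign (a : ℕ) {Q₁ Q₂ : Finset ℕ} (ha : ¬(a ∈ Q₁ ↔ a ∈ Q₂)) (S : Finset ℕ) :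
    (-1 : ℝ) ^ ((flip a S ∩ Q₁).card + (flip a S ∩ Q₂).card)
      = -(-1 : ℝ) ^ ((S ∩ Q₁).card + (S ∩ Q₂).card) := by
  apply neg_one_pow_of_offset
  by_cases h1 : a ∈ Q₁
  · have h2 : a ∉ Q₂ := fun h => ha ⟨fun _ => h, fun _ => h1⟩
    rw [flip_inter_of_notMem h2]
    by_cases haS : a ∈ S
    · right
      have := (flip_inter_card_of_mem h1 S).1 haS
      omega
    · left
      have := (flip_inter_card_of_mem h1 S).2 haS
      omega
  · have h2 : a ∈ Q₂ := by tauto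
    rw [flip_inter_of_notMem h1]
    by_cases haS : a ∈ S
    · right
      have := (flip_inter_card_of_mem h2 S).1 haS
      omega
    · left
      have := (flip_inter_card_of_mem h2 S).2 haS
      omega

lemma flip_ne (a : ℕ) (S : Finset ℕ) : flip a S ≠ S := by
  unfold flip
  split
  · exact Finset.erase_ne_self.mpr ‹a ∈ S›
  · exact Finset.insert_ne_self.mpr ‹a ∉ S›

lemma flip_subset {a : ℕ} {T : Finset ℕ} (haT : a ∈ T) {S : Finset ℕ} (hS : S ⊆ T) :
    flip a S ⊆ T := by
  unfold flip
  split
  · exact (Finset.erase_subset a S).trans hS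
  · exact Finset.insert_subset haT hS

lemma flip_flip (a : ℕ) (S : Finset ℕ) : flip a (flip a S) = S := by
  by_cases h : a ∈ S
  · rw [show flip a S = S.erase a from if_pos h]
    rw [show flip a (S.erase a) = insert a (S.erase a) from if_neg (Finset.notMem_erase a S)]
    exact Finset.insert_erase h
  · rw [show flip a S = insert a S from if_neg h]
    rw [show flip a (insert a S) = (insert a S).erase a from if_pos (Finset.mem_insert_self a S)]
    exact Finset.erase_insert h

lemma sum_eq_zero {T Q₁ Q₂ : Finset ℕ} (h1 : Q₁ ⊆ T) (h2 : Q₂ ⊆ T) (hne : Q₁ ≠ Q₂) :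
    ∑ S ∈ T.powerset, (-1 : ℝ) ^ ((S ∩ Q₁).card + (S ∩ Q₂).card) = 0 := by
  obtain ⟨a, ha⟩ : ∃ a, ¬(a ∈ Q₁ ↔ a ∈ Q₂) :=
    not_forall.mp (fun h => hne (Finset.ext_iff.mpr h))
  have haT : a ∈ T := by
    by_cases h : a ∈ Q₁
    · exact h1 h
    · exact h2 (by tauto)
  refine Finset.sum_involution (fun S _ => flip a S) ?_ ?_ ?_ ?_
  · intro S _
    show (-1:ℝ) ^ ((S ∩ Q₁).card + (S ∩ Q₂).card)
      + (-1:ℝ) ^ ((flip a S ∩ Q₁).card + (flip a S ∩ Q₂).card) = 0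
    rw [flip_sign a ha S]
    ring
  · intro S _ _
    exact flip_ne a S
  · intro S hS
    rw [Finset.mem_powerset] at *
    exact flip_subset haT hS
  · intro S _
    exact flip_flip a S

lemma sum_diag {T Q : Finset ℕ} :
    ∑ S ∈ T.powerset, (-1 : ℝ) ^ ((S ∩ Q).card + (S ∩ Q).card) = 2 ^ T.card := by
  have h : ∀ S : Finset ℕ, (-1 : ℝ) ^ ((S ∩ Q).card + (S ∩ Q).card) = 1 := by
    intro S
    rw [← two_mul, pow_mul]
    norm_num
  rw [Finset.sum_congr rfl fun S _ => h S, Finset.sum_const, nsmul_eq_mul, mul_one,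
    Finset.card_powerset]
  push_cast
  ring

/-- The "support" of `j` as a subset of `Icc 1 m`. -/
def Qset (m j : ℕ) : Finset ℕ :=
  (Finset.Icc 1 m).filter fun k => Nat.testBit j (m - k) = true

lemma Qset_subset (m j : ℕ) : Qset m j ⊆ Finset.Icc 1 m := Finset.filter_subset _ _

lemma Qset_nonempty {m j : ℕ} (h1 : 1 ≤ j) (h2 : j < 2 ^ m) : Qset m j ≠ ∅ := by
  obtain ⟨t, ht, -⟩ := Nat.exists_most_significant_bit (show j ≠ 0 by omega)
  have htm : t < m := by
    by_contra h
    have : j < 2 ^ t := lt_of_lt_of_le h2 (Nat.pow_le_pow_right (by norm_num) (by omega))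
    rw [Nat.testBit_eq_false_of_lt this] at ht
    exact Bool.false_ne_true ht
  apply Finset.ne_empty_of_mem (a := m - t)
  simp only [Qset, Finset.mem_filter, Finset.mem_Icc]
  refine ⟨⟨by omega, by omega⟩, ?_⟩
  rwa [Nat.sub_sub_self htm.le]

lemma Qset_inj {m j₁ j₂ : ℕ} (h₁ : j₁ < 2 ^ m) (h₂ : j₂ < 2 ^ m)
    (h : Qset m j₁ = Qset m j₂) : j₁ = j₂ := by
  apply Nat.eq_of_testBit_eq
  intro t
  by_cases ht : t < m
  · have hk : ∀ j, (Nat.testBit j t = true ↔ (m - t) ∈ Qset m j) := by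
      intro j
      simp only [Qset, Finset.mem_filter, Finset.mem_Icc]
      rw [Nat.sub_sub_self ht.le]
      constructor
      · intro hj; exact ⟨⟨by omega, by omega⟩, hj⟩
      · rintro ⟨-, hj⟩; exact hj
    have hiff := (hk j₁).trans (h ▸ (hk j₂).symm)
    cases ha : Nat.testBit j₁ t <;> cases hb : Nat.testBit j₂ t <;> simp_all
  · rw [Nat.testBit_eq_false_of_lt (lt_of_lt_of_le h₁ (Nat.pow_le_pow_right (by norm_num) (by omega))),
      Nat.testBit_eq_false_of_lt (lt_of_lt_of_le h₂ (Nat.pow_le_pow_right (by norm_num) (by omega)))]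

lemma entry_eq {m j : ℕ} {S : Finset ℕ} (hS : S ⊆ Finset.Icc 1 m) :
    (if lineParity m S j = true then (1 : ℝ) else 0)
      = (1 - (-1 : ℝ) ^ ((S ∩ Qset m j).card)) / 2 := by
  have hfil : S.filter (fun k => Nat.testBit j (m - k) = true) = S ∩ Qset m j := by
    ext x
    simp only [Qset, Finset.mem_filter, Finset.mem_inter]
    constructor
    · rintro ⟨h, hp⟩; exact ⟨h, hS h, hp⟩
    · rintro ⟨h, -, hp⟩; exact ⟨h, hp⟩
  unfold lineParity
  rw [hfil]
  rcases Nat.even_or_odd ((S ∩ Qset m j).card) with he | ho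
  · rw [he.neg_one_pow]
    have h0 : (S ∩ Qset m j).card % 2 = 0 := Nat.even_iff.mp he
    simp [h0]
  · rw [ho.neg_one_pow]
    have h1 : (S ∩ Qset m j).card % 2 = 1 := Nat.odd_iff.mp ho
    simp [h1]

end MflipAux

open MflipAux Finset in
lemma Mflip_mul_transpose (n : ℕ) (hn : 2 ≤ n) :
    Mflip n * (Mflip n)ᵀ
      = (((2:ℝ) ^ (n-1)) / 4) • (1 + Matrix.of fun (_ _ : Fin (2^(n-1) - 1)) => (1 : ℝ)) := by
  set m := n - 1 with hm
  have hm1 : 1 ≤ m := by omega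
  ext i₁ i₂
  have hjlt : ∀ i : Fin (2 ^ m - 1), (i : ℕ) + 1 < 2 ^ m := by
    intro i
    have := i.2
    omega
  set j₁ := (i₁ : ℕ) + 1 with hj₁
  set j₂ := (i₂ : ℕ) + 1 with hj₂
  have hQ₁ := Qset_nonempty (m := m) (j := j₁) (by omega) (hjlt i₁)
  have hQ₂ := Qset_nonempty (m := m) (j := j₂) (by omega) (hjlt i₂)
  rw [Matrix.mul_apply]
  have hsum : ∑ S : NonemptySubset n, Mflip n i₁ S * (Mflip n)ᵀ S i₂
      = ∑ S ∈ ((Finset.Icc 1 m).powerset.erase ∅),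
          ((if lineParity m S j₁ = true then (1:ℝ) else 0) *
           (if lineParity m S j₂ = true then (1:ℝ) else 0)) := by
    rw [← Finset.sum_coe_sort ((Finset.Icc 1 m).powerset.erase ∅)
      (fun S => ((if lineParity m S j₁ = true then (1:ℝ) else 0) *
           (if lineParity m S j₂ = true then (1:ℝ) else 0)))]
    exact Finset.sum_congr rfl fun S _ => by rw [Matrix.transpose_apply]; rfl
  rw [hsum]
  rw [Finset.sum_erase _ (by simp [lineParity])]
  have hbody : ∀ S ∈ (Finset.Icc 1 m).powerset,
      ((if lineParity m S j₁ = true then (1:ℝ) else 0) *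
       (if lineParity m S j₂ = true then (1:ℝ) else 0))
      = (1 - (-1:ℝ) ^ ((S ∩ Qset m j₁).card + (S ∩ (∅:Finset ℕ)).card)
           - (-1:ℝ) ^ ((S ∩ Qset m j₂).card + (S ∩ (∅:Finset ℕ)).card)
           + (-1:ℝ) ^ ((S ∩ Qset m j₁).card + (S ∩ Qset m j₂).card)) / 4 := by
    intro S hS
    rw [Finset.mem_powerset] at hS
    rw [entry_eq hS, entry_eq hS]
    simp only [Finset.inter_empty, Finset.card_empty, Nat.add_zero, pow_add]
    ring
  rw [Finset.sum_congr rfl hbody]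
  have hcardIcc : (Finset.Icc 1 m).card = m := by
    rw [Nat.card_Icc]
    omega
  have hconst : ∑ _S ∈ (Finset.Icc 1 m).powerset, (1:ℝ) = 2 ^ m := by
    rw [Finset.sum_const, nsmul_eq_mul, mul_one, Finset.card_powerset, hcardIcc]
    push_cast
    ring
  have h1 := sum_eq_zero (Qset_subset m j₁) (Finset.empty_subset _) hQ₁
  have h2 := sum_eq_zero (Qset_subset m j₂) (Finset.empty_subset _) hQ₂
  rw [← Finset.sum_div, Finset.sum_add_distrib, Finset.sum_sub_distrib, Finset.sum_sub_distrib,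
    h1, h2, hconst]
  by_cases hii : i₁ = i₂
  · subst hii
    have hdiag : ∑ S ∈ (Finset.Icc 1 m).powerset,
        (-1:ℝ) ^ ((S ∩ Qset m j₁).card + (S ∩ Qset m j₁).card) = 2 ^ m := by
      rw [MflipAux.sum_diag, hcardIcc]
    rw [hdiag]
    simp only [Matrix.smul_apply, Matrix.add_apply, Matrix.one_apply_eq, Matrix.of_apply,
      smul_eq_mul]
    ring
  · have hjj : j₁ ≠ j₂ := by
      simp only [hj₁, hj₂]
      intro h
      exact hii (Fin.ext (by omega))
    have hQQ : Qset m j₁ ≠ Qset m j₂ := fun h => hjj (Qset_inj (hjlt i₁) (hjlt i₂) h)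
    have hoff := sum_eq_zero (Qset_subset m j₁) (Qset_subset m j₂) hQQ
    rw [hoff]
    rw [Matrix.smul_apply, Matrix.add_apply, Matrix.one_apply_ne hii, Matrix.of_apply]
    simp only [smul_eq_mul]
    ring

/-- for `n ≥ 2` the (square, since both index types have cardinality
`2^(n-1) - 1`) flip-state matrix `M` is invertible: it has a two-sided inverse. -/
theorem Mflip_invertible (n : ℕ) (hn : 2 ≤ n) :
    ∃ B : Matrix (NonemptySubset n) (Fin (2^(n-1) - 1)) ℝ,
      Mflip n * B = 1 ∧ B * Mflip n = 1 := by
  classical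
  have hAAT := Mflip_mul_transpose n hn
  set J : Matrix (Fin (2^(n-1) - 1)) (Fin (2^(n-1) - 1)) ℝ :=
    Matrix.of fun _ _ => (1:ℝ) with hJ
  set N : ℝ := (2:ℝ) ^ (n-1) with hN
  have hNpos : (0:ℝ) < N := by rw [hN]; positivity
  have hNne : N ≠ 0 := ne_of_gt hNpos
  have hJJ : J * J = (N - 1) • J := by
    ext i k
    rw [Matrix.mul_apply, Matrix.smul_apply]
    simp only [hJ, Matrix.of_apply, mul_one, smul_eq_mul]
    rw [Finset.sum_const, Finset.card_univ, Fintype.card_fin, nsmul_eq_mul, mul_one, hN]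
    have h1 : (1:ℕ) ≤ 2 ^ (n-1) := Nat.one_le_two_pow
    push_cast [h1]
    ring
  have hkey : Mflip n * (((4:ℝ)/N) • ((Mflip n)ᵀ * (1 - ((1:ℝ)/N) • J))) = 1 := by
    rw [Matrix.mul_smul, ← Matrix.mul_assoc, hAAT, Matrix.smul_mul, smul_smul]
    have hc : (4:ℝ)/N * (N/4) = 1 := by field_simp
    rw [hc, one_smul]
    rw [mul_sub, mul_one, Matrix.mul_smul, add_mul, Matrix.one_mul, hJJ]
    rw [smul_add, smul_smul]
    have hc2 : (1:ℝ)/N * (N - 1) = 1 - 1/N := by field_simp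
    rw [hc2, ← add_smul]
    have hc3 : (1:ℝ)/N + (1 - 1/N) = 1 := by ring
    rw [hc3, one_smul]
    exact add_sub_cancel_right 1 J
  refine ⟨_, hkey, (Matrix.mul_eq_one_comm_of_equiv (Fintype.equivOfCardEq ?_)).mp hkey⟩
  rw [Fintype.card_fin, Fintype.card_coe,
    Finset.card_erase_of_mem (Finset.empty_mem_powerset _),
    Finset.card_powerset, Nat.card_Icc]
  simp
end
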